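/- arXiv:2309.01300 — 2 statements merged into one kernel-verified Lean document; each statement's English description precedes it below -/
import Mathlib

section
/- Let ψ be a critical branching mechanism (ψ'(0+) = 0) satisfying ∫^∞ 1/ψ < ∞, φ with inverse φ̂, and u_t(λ) = φ̂(t + φ(λ)). Then for every x > 0, s > 0 and λ > 0, lim_{t→∞} [e^{-x φ̂(t+φ(λ+φ̂(s)))} − e^{-xφ̂(t)}] / [e^{-xφ̂(t+s)} − e^{-xφ̂(t)}] = φ(λ + φ̂(s))/s. -/
/-!
Numerator and denominator are increments of `y ↦ e^{-xy}` along `φ̂`, which decreases to `0`.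
Since `φ̂' = -ψ ∘ φ̂`, the increment `φ̂ t - φ̂ (t + u)` lies between `u ψ (φ̂ (t + u))` and
`u ψ (φ̂ t)`. In the critical case `ψ'(0+) = 0`, so `ψ (φ̂ (t + u)) / ψ (φ̂ t) → 1` and
`φ̂ t - φ̂ (t + u) ~ u ψ (φ̂ t)`. As `y ↦ e^{-xy}` is strictly differentiable at `0`, both
increments are `~ x u ψ (φ̂ t)`, with `u = φ(λ + φ̂(s))` and `u = s`, and their ratio tends
to `φ(λ + φ̂(s)) / s`.
-/

open MeasureTheory Set Filter

/-- A branching mechanism given by the Lévy–Khintchine formula. -/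
def LevyMechanism (α σ : ℝ) (π : Measure ℝ) (ψ : ℝ → ℝ) : Prop :=
  0 ≤ σ ∧
  Integrable (fun r => min r (r ^ 2)) (π.restrict (Set.Ioi 0)) ∧
  ∀ l : ℝ, ψ l = α * l + σ ^ 2 / 2 * l ^ 2 +
      ∫ r in Set.Ioi 0, (Real.exp (-l * r) - 1 + l * r) ∂π

open Topology
open Real (exp exp_pos exp_add exp_zero exp_le_one_iff add_one_le_exp)

lemma min_mul_le_max_mul_min {a b x y : ℝ} (hx : 0 ≤ x) (hy : 0 ≤ y) (hab : 0 ≤ max a b) :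
    min (a * x) (b * y) ≤ max a b * min x y := by
  rw [mul_min_of_nonneg _ _ hab]
  exact min_le_min (mul_le_mul_of_nonneg_right (le_max_left a b) hx)
    (mul_le_mul_of_nonneg_right (le_max_right a b) hy)

lemma exp_neg_mul_sub_one_add_nonneg (l r : ℝ) : 0 ≤ exp (-l * r) - 1 + l * r := by
  linarith [add_one_le_exp (-l * r)]

lemma exp_neg_mul_sub_one_add_le_max_mul_min {l r : ℝ} (hl : 0 ≤ l) (hr : 0 ≤ r) :
    exp (-l * r) - 1 + l * r ≤ max l (l ^ 2) * min r (r ^ 2) := by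
  set u := l * r with hu
  have hu0 : 0 ≤ u := mul_nonneg hl hr
  have hexp : exp (-l * r) * exp u = 1 := by rw [← exp_add, hu]; ring_nf; exact exp_zero
  have hle_u : exp (-l * r) - 1 + u ≤ u := by
    linarith [exp_le_one_iff.2 (by nlinarith : -l * r ≤ 0)]
  have hle_sq : exp (-l * r) - 1 + u ≤ u ^ 2 := by
    nlinarith [add_one_le_exp u, exp_pos (-l * r)]
  calc exp (-l * r) - 1 + u ≤ min (l * r) (l ^ 2 * r ^ 2) := by
        rw [← hu, show l ^ 2 * r ^ 2 = u ^ 2 by ring]; exact le_min hle_u hle_sq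
    _ ≤ max l (l ^ 2) * min r (r ^ 2) :=
        min_mul_le_max_mul_min hr (sq_nonneg r) (hl.trans (le_max_left _ _))

lemma exp_neg_mul_sub_one_add_mono {m b r : ℝ} (hm : 0 ≤ m) (hmb : m ≤ b) (hr : 0 ≤ r) :
    exp (-m * r) - 1 + m * r ≤ exp (-b * r) - 1 + b * r := by
  have hsplit : exp (-b * r) = exp (-m * r) * exp (-((b - m) * r)) := by
    rw [← exp_add]; ring_nf
  have hle_one : exp (-m * r) ≤ 1 := exp_le_one_iff.2 (by nlinarith)
  nlinarith [add_one_le_exp (-((b - m) * r)), exp_pos (-m * r), mul_nonneg (sub_nonneg.2 hmb) hr]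

lemma exp_neg_mul_sub_one_add_sub_le {m b r : ℝ} (hmb : m ≤ b) (hr : 0 < r) :
    (exp (-b * r) - 1 + b * r) - (exp (-m * r) - 1 + m * r) ≤ (b - m) * min r (b * r ^ 2) := by
  have hsplit : exp (-m * r) = exp (-b * r) * exp ((b - m) * r) := by
    rw [← exp_add]; ring_nf
  have hdiff : (exp (-b * r) - 1 + b * r) - (exp (-m * r) - 1 + m * r)
      ≤ (b - m) * r * (1 - exp (-b * r)) := by
    nlinarith [add_one_le_exp ((b - m) * r), exp_pos (-b * r)]
  have hone : 1 - exp (-b * r) ≤ min 1 (b * r) :=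
    le_min (by linarith [exp_pos (-b * r)]) (by linarith [add_one_le_exp (-b * r)])
  calc _ ≤ (b - m) * r * (1 - exp (-b * r)) := hdiff
    _ ≤ (b - m) * r * min 1 (b * r) :=
        mul_le_mul_of_nonneg_left hone (mul_nonneg (sub_nonneg.2 hmb) hr.le)
    _ = (b - m) * min r (b * r ^ 2) := by
        rw [mul_assoc, mul_min_of_nonneg _ _ hr.le]; ring_nf

lemma integrable_min_mul_sq {π : Measure ℝ}
    (hπ : Integrable (fun r => min r (r ^ 2)) (π.restrict (Ioi 0))) {b : ℝ} (hb : 0 ≤ b) :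
    Integrable (fun r => min r (b * r ^ 2)) (π.restrict (Ioi 0)) := by
  refine (hπ.const_mul (max 1 b)).mono' (by fun_prop) ?_
  refine (ae_restrict_iff' measurableSet_Ioi).2 (.of_forall fun r (hr : 0 < r) => ?_)
  rw [Real.norm_of_nonneg (le_min hr.le (by positivity))]
  simpa using min_mul_le_max_mul_min hr.le (sq_nonneg r) (zero_le_one.trans (le_max_left 1 b))

lemma integrable_exp_neg_mul_sub_one_add {π : Measure ℝ}
    (hπ : Integrable (fun r => min r (r ^ 2)) (π.restrict (Ioi 0))) {l : ℝ} (hl : 0 ≤ l) :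
    Integrable (fun r => exp (-l * r) - 1 + l * r) (π.restrict (Ioi 0)) := by
  refine (hπ.const_mul (max l (l ^ 2))).mono' (by fun_prop) ?_
  refine (ae_restrict_iff' measurableSet_Ioi).2 (.of_forall fun r (hr : 0 < r) => ?_)
  rw [Real.norm_of_nonneg (exp_neg_mul_sub_one_add_nonneg l r)]
  exact exp_neg_mul_sub_one_add_le_max_mul_min hl hr.le

lemma tendsto_integral_min_mul_sq {π : Measure ℝ}
    (hπ : Integrable (fun r => min r (r ^ 2)) (π.restrict (Ioi 0))) :
    Tendsto (fun b => ∫ r in Ioi 0, min r (b * r ^ 2) ∂π) (𝓝[>] 0) (𝓝 0) := by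
  have hlim : ∀ᵐ r ∂π.restrict (Ioi 0),
      Tendsto (fun b : ℝ => min r (b * r ^ 2)) (𝓝[>] 0) (𝓝 0) := by
    refine (ae_restrict_iff' measurableSet_Ioi).2 (.of_forall fun r (hr : 0 < r) => ?_)
    have : Continuous fun b : ℝ => min r (b * r ^ 2) := by fun_prop
    simpa [hr.le] using (this.tendsto 0).mono_left nhdsWithin_le_nhds
  have hdom : ∀ᶠ b in 𝓝[>] (0 : ℝ), ∀ᵐ r ∂π.restrict (Ioi 0),
      ‖min r (b * r ^ 2)‖ ≤ min r (r ^ 2) := by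
    filter_upwards [Ioc_mem_nhdsGT zero_lt_one] with b ⟨hb0, hb1⟩
    refine (ae_restrict_iff' measurableSet_Ioi).2 (.of_forall fun r (hr : 0 < r) => ?_)
    rw [Real.norm_of_nonneg (le_min hr.le (by positivity))]
    exact min_le_min le_rfl (by nlinarith [sq_nonneg r])
  simpa using tendsto_integral_filter_of_dominated_convergence _
    (.of_forall fun b => by fun_prop) hdom hπ hlim

/-- `ψ' b = α + σ² b + ∫ r (1 - e^{-br}) dπ` and `r (1 - e^{-br}) ≤ min r (b r²)`: a bound for
the difference quotients of `ψ` on `[0, b]` which still tends to `ψ'(0+) = α`. -/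
noncomputable def levySlope (α σ : ℝ) (π : Measure ℝ) (b : ℝ) : ℝ :=
  α + σ ^ 2 * b + ∫ r in Ioi 0, min r (b * r ^ 2) ∂π

lemma levySlope_nonneg {α σ : ℝ} {π : Measure ℝ} (hα : 0 ≤ α) {b : ℝ} (hb : 0 ≤ b) :
    0 ≤ levySlope α σ π b := by
  have : 0 ≤ ∫ r in Ioi 0, min r (b * r ^ 2) ∂π :=
    setIntegral_nonneg measurableSet_Ioi fun r (hr : 0 < r) => le_min hr.le (by positivity)
  unfold levySlope
  positivity

lemma tendsto_levySlope {α σ : ℝ} {π : Measure ℝ}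
    (hπ : Integrable (fun r => min r (r ^ 2)) (π.restrict (Ioi 0))) :
    Tendsto (levySlope α σ π) (𝓝[>] 0) (𝓝 α) := by
  have hlin : Tendsto (fun b : ℝ => α + σ ^ 2 * b) (𝓝[>] 0) (𝓝 α) := by
    have : Continuous fun b : ℝ => α + σ ^ 2 * b := by fun_prop
    simpa using (this.tendsto 0).mono_left nhdsWithin_le_nhds
  have h := hlin.add (tendsto_integral_min_mul_sq hπ)
  rw [add_zero] at h
  exact h

namespace LevyMechanism

variable {α σ : ℝ} {π : Measure ℝ} {ψ : ℝ → ℝ}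

lemma monotoneOn (hψ : LevyMechanism α σ π ψ) (hα : 0 ≤ α) : MonotoneOn ψ (Ici 0) := by
  obtain ⟨-, hπ, hψ⟩ := hψ
  intro m (hm : 0 ≤ m) b (hb : 0 ≤ b) hmb
  have hint : ∫ r in Ioi 0, (exp (-m * r) - 1 + m * r) ∂π
      ≤ ∫ r in Ioi 0, (exp (-b * r) - 1 + b * r) ∂π :=
    setIntegral_mono_on (integrable_exp_neg_mul_sub_one_add hπ hm)
      (integrable_exp_neg_mul_sub_one_add hπ hb) measurableSet_Ioi
      fun r (hr : 0 < r) => exp_neg_mul_sub_one_add_mono hm hmb hr.le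
  rw [hψ m, hψ b]
  nlinarith [mul_nonneg (sq_nonneg σ) (mul_nonneg (sub_nonneg.2 hmb) (add_nonneg hb hm))]

lemma sub_le_mul_levySlope (hψ : LevyMechanism α σ π ψ) {m b : ℝ} (hm : 0 ≤ m) (hmb : m ≤ b) :
    ψ b - ψ m ≤ (b - m) * levySlope α σ π b := by
  obtain ⟨-, hπ, hψ⟩ := hψ
  have hb : 0 ≤ b := hm.trans hmb
  have hint : (∫ r in Ioi 0, (exp (-b * r) - 1 + b * r) ∂π)
        - ∫ r in Ioi 0, (exp (-m * r) - 1 + m * r) ∂π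
      ≤ (b - m) * ∫ r in Ioi 0, min r (b * r ^ 2) ∂π := by
    rw [← integral_sub (integrable_exp_neg_mul_sub_one_add hπ hb)
      (integrable_exp_neg_mul_sub_one_add hπ hm), ← integral_const_mul]
    exact setIntegral_mono_on ((integrable_exp_neg_mul_sub_one_add hπ hb).sub
      (integrable_exp_neg_mul_sub_one_add hπ hm)) ((integrable_min_mul_sq hπ hb).const_mul _)
      measurableSet_Ioi fun r (hr : 0 < r) => exp_neg_mul_sub_one_add_sub_le hmb hr
  rw [hψ m, hψ b, levySlope]
  nlinarith [mul_nonneg (sq_nonneg σ) (sq_nonneg (b - m))]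

end LevyMechanism

lemma HasStrictDerivAt.tendsto_slope_comp {𝕜 α : Type*} [NontriviallyNormedField 𝕜]
    {f : 𝕜 → 𝕜} {f' a : 𝕜} (hf : HasStrictDerivAt f f' a) {l : Filter α} {p q : α → 𝕜}
    (hp : Tendsto p l (𝓝 a)) (hq : Tendsto q l (𝓝 a)) (hpq : ∀ᶠ t in l, p t ≠ q t) :
    Tendsto (fun t => (f (p t) - f (q t)) / (p t - q t)) l (𝓝 f') := by
  have hlo := (hasDerivAtFilter_iff_isLittleO.1 hf).comp_tendsto (hp.prodMk_nhds hq)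
  have h0 := hlo.tendsto_div_nhds_zero.add_const f'
  rw [zero_add] at h0
  refine h0.congr' ?_
  filter_upwards [hpq] with t ht
  simp only [Function.comp_apply, smul_eq_mul]
  field_simp [sub_ne_zero.2 ht]
  ring

section InverseScaleFunction

variable {φ φhat : ℝ → ℝ} (hφanti : StrictAntiOn φ (Ioi 0))
  (hφhat : ∀ t > (0 : ℝ), 0 < φhat t ∧ φ (φhat t) = t)
include hφanti hφhat

lemma phihat_lt_iff {t b : ℝ} (ht : 0 < t) (hb : 0 < b) : φhat t < b ↔ φ b < t := by
  conv_rhs => rw [← (hφhat t ht).2]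
  exact (hφanti.lt_iff_gt hb (hφhat t ht).1).symm

lemma strictAntiOn_phihat : StrictAntiOn φhat (Ioi 0) := by
  intro t (ht : 0 < t) t' (ht' : 0 < t') htt'
  rw [phihat_lt_iff hφanti hφhat ht' (hφhat t ht).1, (hφhat t ht).2]
  exact htt'

lemma tendsto_phihat_atTop : Tendsto φhat atTop (𝓝[>] 0) := by
  refine tendsto_nhdsWithin_iff.2 ⟨tendsto_order.2 ⟨fun b hb => ?_, fun b hb => ?_⟩, ?_⟩
  · filter_upwards [eventually_gt_atTop 0] with t ht using hb.trans (hφhat t ht).1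
  · filter_upwards [eventually_gt_atTop (max (φ b) 0)] with t ht
    rw [max_lt_iff] at ht
    exact (phihat_lt_iff hφanti hφhat ht.2 hb).2 ht.1
  · filter_upwards [eventually_gt_atTop 0] with t ht using (hφhat t ht).1

end InverseScaleFunction

section ScaleFunction

variable {ψ φ φhat : ℝ → ℝ} (hψpos : ∀ l > (0 : ℝ), 0 < ψ l) (hψmono : MonotoneOn ψ (Ioi 0))
  (hint : ∀ l > (0 : ℝ), IntegrableOn (fun v => 1 / ψ v) (Ioi l))
  (hφ : ∀ l > (0 : ℝ), φ l = ∫ v in Ioi l, 1 / ψ v)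
  (hφhat : ∀ t > (0 : ℝ), 0 < φhat t ∧ φ (φhat t) = t)

include hint hφ in
lemma phi_sub_eq_intervalIntegral {m b : ℝ} (hm : 0 < m) (hb : 0 < b) :
    φ m - φ b = ∫ v in m..b, 1 / ψ v := by
  rw [hφ m hm, hφ b hb, intervalIntegral.integral_Ioi_sub_Ioi' (hint m hm) (hint b hb)]

include hint in
lemma intervalIntegrable_one_div {m b : ℝ} (hm : 0 < m) (hmb : m ≤ b) :
    IntervalIntegrable (fun v => 1 / ψ v) volume m b :=
  (intervalIntegrable_iff_integrableOn_Ioc_of_le hmb).2 ((hint m hm).mono_set Ioc_subset_Ioi_self)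

include hψpos hψmono hint hφ in
lemma sub_div_le_phi_sub {m b : ℝ} (hm : 0 < m) (hmb : m ≤ b) :
    (b - m) / ψ b ≤ φ m - φ b := by
  have hb : 0 < b := hm.trans_le hmb
  rw [phi_sub_eq_intervalIntegral hint hφ hm hb, div_eq_mul_one_div, ← smul_eq_mul,
    ← intervalIntegral.integral_const]
  refine intervalIntegral.integral_mono_on hmb intervalIntegrable_const
    (intervalIntegrable_one_div hint hm hmb) fun v hv => ?_
  have hv0 : 0 < v := hm.trans_le hv.1
  exact one_div_le_one_div_of_le (hψpos v hv0) (hψmono hv0 hb hv.2)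

include hψpos hψmono hint hφ in
lemma phi_sub_le_sub_div {m b : ℝ} (hm : 0 < m) (hmb : m ≤ b) :
    φ m - φ b ≤ (b - m) / ψ m := by
  rw [phi_sub_eq_intervalIntegral hint hφ hm (hm.trans_le hmb), div_eq_mul_one_div,
    ← smul_eq_mul, ← intervalIntegral.integral_const]
  refine intervalIntegral.integral_mono_on hmb (intervalIntegrable_one_div hint hm hmb)
    intervalIntegrable_const fun v hv => ?_
  exact one_div_le_one_div_of_le (hψpos m hm) (hψmono hm (hm.trans_le hv.1) hv.1)

include hψpos hψmono hint hφ in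
lemma strictAntiOn_phi : StrictAntiOn φ (Ioi 0) := by
  intro m (hm : 0 < m) b (hb : 0 < b) hmb
  have := sub_div_le_phi_sub hψpos hψmono hint hφ hm hmb.le
  have : 0 < (b - m) / ψ b := div_pos (sub_pos.2 hmb) (hψpos b hb)
  linarith

include hψpos hψmono hint hφ in
lemma phi_pos {m : ℝ} (hm : 0 < m) : 0 < φ m := by
  have hφ_nonneg : 0 ≤ φ (m + 1) := by
    rw [hφ _ (by linarith)]
    exact setIntegral_nonneg measurableSet_Ioi fun v (hv : m + 1 < v) =>
      (one_div_pos.2 (hψpos v (by linarith))).le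
  have := strictAntiOn_phi hψpos hψmono hint hφ hm (show 0 < m + 1 by linarith)
    (lt_add_one m)
  linarith

include hψpos hψmono hint hφ hφhat in
/-- The integrated form of `φ̂' = -ψ ∘ φ̂`. -/
lemma phihat_sub_bounds {t u : ℝ} (ht : 0 < t) (hu : 0 ≤ u) :
    u * ψ (φhat (t + u)) ≤ φhat t - φhat (t + u) ∧ φhat t - φhat (t + u) ≤ u * ψ (φhat t) := by
  have htu : 0 < t + u := by linarith
  have hφanti := strictAntiOn_phi hψpos hψmono hint hφ
  have hm := (hφhat (t + u) htu).1
  have hmb : φhat (t + u) ≤ φhat t :=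
    (strictAntiOn_phihat hφanti hφhat).antitoneOn ht htu (by linarith)
  have hφsub : φ (φhat (t + u)) - φ (φhat t) = u := by
    rw [(hφhat t ht).2, (hφhat (t + u) htu).2]; ring
  have hlow := phi_sub_le_sub_div hψpos hψmono hint hφ hm hmb
  have hupp := sub_div_le_phi_sub hψpos hψmono hint hφ hm hmb
  rw [hφsub, le_div_iff₀ (hψpos _ hm)] at hlow
  rw [hφsub, div_le_iff₀ (hψpos _ (hm.trans_le hmb))] at hupp
  exact ⟨hlow, hupp⟩

include hψpos hψmono hint hφ hφhat in
lemma tendsto_phihat_sub_div_psi {g : ℝ → ℝ} (hg0 : ∀ b > (0 : ℝ), 0 ≤ g b)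
    (hcrit : ∀ m b : ℝ, 0 < m → m ≤ b → ψ b - ψ m ≤ (b - m) * g b)
    (hg : Tendsto g (𝓝[>] 0) (𝓝 0)) {u : ℝ} (hu : 0 ≤ u) :
    Tendsto (fun t => (φhat t - φhat (t + u)) / ψ (φhat t)) atTop (𝓝 u) := by
  have hφanti := strictAntiOn_phi hψpos hψmono hint hφ
  -- Criticality gives `ψ (φ̂ (t + u)) ≥ ψ (φ̂ t) (1 - u g (φ̂ t))`.
  have hlow : Tendsto (fun t => u * (1 - u * g (φhat t))) atTop (𝓝 u) := by
    simpa using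
      (((hg.comp (tendsto_phihat_atTop hφanti hφhat)).const_mul u).const_sub 1).const_mul u
  refine tendsto_of_tendsto_of_tendsto_of_le_of_le' hlow tendsto_const_nhds ?_ ?_
  · filter_upwards [eventually_gt_atTop 0] with t ht
    have htu : 0 < t + u := by linarith
    have hb := (hφhat t ht).1
    have hmb : φhat (t + u) ≤ φhat t :=
      (strictAntiOn_phihat hφanti hφhat).antitoneOn ht htu (by linarith)
    have hψsub := hcrit _ _ (hφhat (t + u) htu).1 hmb
    obtain ⟨hΔlow, hΔupp⟩ := phihat_sub_bounds hψpos hψmono hint hφ hφhat ht hu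
    rw [le_div_iff₀ (hψpos _ hb)]
    nlinarith [mul_le_mul_of_nonneg_right hΔupp (hg0 _ hb), mul_nonneg hu (hg0 _ hb)]
  · filter_upwards [eventually_gt_atTop 0] with t ht
    rw [div_le_iff₀ (hψpos _ (hφhat t ht).1)]
    exact (phihat_sub_bounds hψpos hψmono hint hφ hφhat ht hu).2

include hψpos hψmono hint hφ hφhat in
lemma tendsto_sub_comp_phihat_div_psi {g : ℝ → ℝ} (hg0 : ∀ b > (0 : ℝ), 0 ≤ g b)
    (hcrit : ∀ m b : ℝ, 0 < m → m ≤ b → ψ b - ψ m ≤ (b - m) * g b)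
    (hg : Tendsto g (𝓝[>] 0) (𝓝 0)) {f : ℝ → ℝ} {f' : ℝ} (hf : HasStrictDerivAt f f' 0)
    {u : ℝ} (hu : 0 < u) :
    Tendsto (fun t => (f (φhat t) - f (φhat (t + u))) / ψ (φhat t)) atTop (𝓝 (f' * u)) := by
  have hφanti := strictAntiOn_phi hψpos hψmono hint hφ
  have hlim := tendsto_nhds_of_tendsto_nhdsWithin (tendsto_phihat_atTop hφanti hφhat)
  have hne : ∀ᶠ t in atTop, φhat t ≠ φhat (t + u) := by
    filter_upwards [eventually_gt_atTop 0] with t ht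
    exact ((strictAntiOn_phihat hφanti hφhat) ht (show 0 < t + u by linarith)
      (by linarith)).ne'
  have hslope := hf.tendsto_slope_comp hlim
    (hlim.comp (tendsto_atTop_add_const_right atTop u tendsto_id)) hne
  refine (hslope.mul (tendsto_phihat_sub_div_psi hψpos hψmono hint hφ hφhat hg0 hcrit hg
    hu.le)).congr' ?_
  filter_upwards [hne] with t ht
  exact div_mul_div_cancel₀ (sub_ne_zero.2 ht)

end ScaleFunction

/-- Critical case: the conditional Laplace functional of `Z_t` given
`t ≤ ζ < t+s` converges to `φ(λ + φ̂(s))/s` as `t → ∞`. -/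
theorem stmt13 (σ : ℝ) (π : Measure ℝ) (ψ φ φhat : ℝ → ℝ)
    (hψ : LevyMechanism 0 σ π ψ)
    (hψpos : ∀ l > (0 : ℝ), 0 < ψ l)
    (hint : ∀ l > (0 : ℝ), IntegrableOn (fun v => 1 / ψ v) (Set.Ioi l))
    (hφ : ∀ l > (0 : ℝ), φ l = ∫ v in Set.Ioi l, 1 / ψ v)
    (hφhat : ∀ t > (0 : ℝ), 0 < φhat t ∧ φ (φhat t) = t) :
    ∀ x > (0 : ℝ), ∀ s > (0 : ℝ), ∀ l > (0 : ℝ),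
      Tendsto (fun t =>
          (Real.exp (-x * φhat (t + φ (l + φhat s))) - Real.exp (-x * φhat t)) /
            (Real.exp (-x * φhat (t + s)) - Real.exp (-x * φhat t)))
        atTop (nhds (φ (l + φhat s) / s)) := by
  intro x hx s hs l hl
  have hψmono : MonotoneOn ψ (Ioi 0) := (hψ.monotoneOn le_rfl).mono Ioi_subset_Ici_self
  have ha : 0 < φ (l + φhat s) := phi_pos hψpos hψmono hint hφ (by linarith [(hφhat s hs).1])
  have hexp : HasStrictDerivAt (fun y => exp (-x * y)) (-x) 0 := by
    simpa using ((hasStrictDerivAt_id (0 : ℝ)).const_mul (-x)).exp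
  have hinc := fun u (hu : 0 < u) =>
    tendsto_sub_comp_phihat_div_psi hψpos hψmono hint hφ hφhat
      (fun b hb => levySlope_nonneg le_rfl hb.le)
      (fun m b hm hmb => hψ.sub_le_mul_levySlope hm.le hmb) (tendsto_levySlope hψ.2.1) hexp hu
  have hlim := (hinc _ ha).div (hinc s hs) (mul_ne_zero (neg_ne_zero.2 hx.ne') hs.ne')
  rw [mul_div_mul_left _ _ (neg_ne_zero.2 hx.ne')] at hlim
  refine hlim.congr' ?_
  filter_upwards [eventually_gt_atTop 0] with t ht
  rw [Pi.div_apply, div_div_div_cancel_right₀ (hψpos _ (hφhat t ht).1).ne', ← neg_div_neg_eq,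
    neg_sub, neg_sub]
end

section
/- Let ψ be a (sub)critical branching mechanism satisfying ∫^∞ 1/ψ < ∞, φ with inverse φ̂, α = ψ'(0+) ≥ 0. Then for every q > 0 and λ > 0, lim_{t→∞} e^{-x(φ̂(t−q+φ(λ+φ̂(q))) − φ̂(t))} · ψ(φ̂(t−q+φ(λ+φ̂(q))))/ψ(φ̂(t)) · ψ(φ̂(q))/ψ(λ+φ̂(q)) = e^{−α(φ(λ+φ̂(q)) − q)} ψ(φ̂(q))/ψ(λ+φ̂(q)). -/
open MeasureTheory Set Filter

/-!
Differentiating the Lévy–Khintchine formula under the integral gives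
`ψ' l = α + σ² l + ∫ r (1 - e^{-lr}) π(dr)`, so `α ≤ ψ'` and `ψ'(0+) = α`.
Put `s = φ(λ + φ̂ q) - q ≤ 0`, `u = φ̂ t` and `v = φ̂ (t + s)`.
Then `∫_u^v 1/ψ = φ u - φ v = -s`, so `log ψ v - log ψ u = ∫_u^v ψ'/ψ` lies between
`-α s` and `-(α + ε) s` once `v` is small.
As `φ̂ t → 0`, the ratio `ψ v / ψ u` tends to `e^{-α s}` while `e^{-x (v - u)} → 1`.
-/

open scoped Topology

lemma exp_neg_sub_one_add_le_sq {y : ℝ} (hy : 0 ≤ y) : Real.exp (-y) - 1 + y ≤ y ^ 2 := by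
  rcases le_or_gt y 1 with h | h
  · have := (abs_le.1 (Real.abs_exp_sub_one_sub_id_le (x := -y) (by simpa [abs_of_nonneg hy]))).2
    linarith [neg_sq y]
  · nlinarith [Real.exp_le_one_iff.2 (neg_nonpos.2 hy)]

lemma exp_neg_mul_sub_one_add_le {x r : ℝ} (hx : 0 ≤ x) (hr : 0 ≤ r) :
    Real.exp (-x * r) - 1 + x * r ≤ (x + x ^ 2) * min r (r ^ 2) := by
  have hxr : 0 ≤ x * r := mul_nonneg hx hr
  have hexp : Real.exp (-(x * r)) ≤ 1 := Real.exp_le_one_iff.2 (neg_nonpos.2 hxr)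
  rw [neg_mul]
  rcases le_total r 1 with h | h
  · rw [min_eq_right (by nlinarith)]
    nlinarith [exp_neg_sub_one_add_le_sq hxr]
  · rw [min_eq_left (by nlinarith)]
    nlinarith

lemma mul_one_sub_exp_neg_mul_nonneg {x r : ℝ} (hx : 0 ≤ x) (hr : 0 ≤ r) :
    0 ≤ r * (1 - Real.exp (-x * r)) :=
  mul_nonneg hr (sub_nonneg.2 (Real.exp_le_one_iff.2 (by nlinarith)))

lemma mul_one_sub_exp_neg_mul_le {x c r : ℝ} (hx : 0 ≤ x) (hxc : x ≤ c) (hr : 0 ≤ r) :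
    r * (1 - Real.exp (-x * r)) ≤ (1 + c) * min r (r ^ 2) := by
  have hlin : 1 - Real.exp (-x * r) ≤ x * r := by linarith [Real.add_one_le_exp (-x * r)]
  have hone : 1 - Real.exp (-x * r) ≤ 1 := by linarith [Real.exp_pos (-x * r)]
  rcases le_total r 1 with h | h
  · rw [min_eq_right (by nlinarith)]
    nlinarith
  · rw [min_eq_left (by nlinarith)]
    nlinarith

noncomputable def levyMechanismDeriv (α σ : ℝ) (π : Measure ℝ) (l : ℝ) : ℝ :=
  α + σ ^ 2 * l + ∫ r in Ioi 0, r * (1 - Real.exp (-l * r)) ∂π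

section LevyIntegral

variable {π : Measure ℝ}

lemma hasDerivAt_levyIntegral
    (hπ : Integrable (fun r => min r (r ^ 2)) (π.restrict (Ioi 0))) {l : ℝ} (hl : 0 < l) :
    HasDerivAt (fun x => ∫ r in Ioi 0, (Real.exp (-x * r) - 1 + x * r) ∂π)
      (∫ r in Ioi 0, r * (1 - Real.exp (-l * r)) ∂π) l := by
  have hball : ∀ x ∈ Metric.ball l (l / 2), 0 ≤ x ∧ x ≤ 2 * l := fun x hx => by
    rw [Metric.mem_ball, Real.dist_eq, abs_lt] at hx
    constructor <;> linarith
  refine (hasDerivAt_integral_of_dominated_loc_of_deriv_le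
    (F := fun x r => Real.exp (-x * r) - 1 + x * r)
    (F' := fun x r => r * (1 - Real.exp (-x * r)))
    (bound := fun r => (1 + 2 * l) * min r (r ^ 2)) (Metric.ball_mem_nhds l (half_pos hl))
    (.of_forall fun x => (by fun_prop : Continuous _).aestronglyMeasurable) ?_
    (by fun_prop : Continuous _).aestronglyMeasurable ?_ (hπ.const_mul _) ?_).2
  · refine (hπ.const_mul (l + l ^ 2)).mono' (by fun_prop : Continuous _).aestronglyMeasurable ?_
    filter_upwards [ae_restrict_mem measurableSet_Ioi] with r (hr : 0 < r)
    rw [Real.norm_of_nonneg (by linarith [Real.add_one_le_exp (-l * r)])]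
    exact exp_neg_mul_sub_one_add_le hl.le hr.le
  · filter_upwards [ae_restrict_mem measurableSet_Ioi] with r (hr : 0 < r) x hx
    obtain ⟨hx0, hxl⟩ := hball x hx
    rw [Real.norm_of_nonneg (mul_one_sub_exp_neg_mul_nonneg hx0 hr.le)]
    exact mul_one_sub_exp_neg_mul_le hx0 hxl hr.le
  · refine .of_forall fun r x _ => ?_
    refine ((((hasDerivAt_neg x).mul_const r).exp.sub_const 1).add
      ((hasDerivAt_id x).mul_const r)).congr_deriv ?_
    ring

lemma tendsto_levyIntegralDeriv_nhdsGT_zero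
    (hπ : Integrable (fun r => min r (r ^ 2)) (π.restrict (Ioi 0))) :
    Tendsto (fun l => ∫ r in Ioi 0, r * (1 - Real.exp (-l * r)) ∂π) (𝓝[>] 0) (𝓝 0) := by
  have hlim := tendsto_integral_filter_of_dominated_convergence (μ := π.restrict (Ioi 0))
    (l := 𝓝[>] 0) (f := fun _ => 0) (F := fun l r => r * (1 - Real.exp (-l * r)))
    (bound := fun r => (1 + 1) * min r (r ^ 2))
    (.of_forall fun l => (by fun_prop : Continuous _).aestronglyMeasurable) ?_
    (hπ.const_mul _) (.of_forall fun r => ?_)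
  · simpa using hlim
  · filter_upwards [Ioc_mem_nhdsGT (zero_lt_one' ℝ)] with l ⟨hl0, hl1⟩
    filter_upwards [ae_restrict_mem measurableSet_Ioi] with r (hr : 0 < r)
    rw [Real.norm_of_nonneg (mul_one_sub_exp_neg_mul_nonneg hl0.le hr.le)]
    exact mul_one_sub_exp_neg_mul_le hl0.le hl1 hr.le
  · exact ((by fun_prop : Continuous fun l : ℝ => r * (1 - Real.exp (-l * r))).tendsto' 0 _
      (by simp)).mono_left nhdsWithin_le_nhds

end LevyIntegral

section levyMechanismDeriv

variable {α σ : ℝ} {π : Measure ℝ}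

lemma LevyMechanism.hasDerivAt {ψ : ℝ → ℝ} (hψ : LevyMechanism α σ π ψ) {l : ℝ}
    (hl : 0 < l) :
    HasDerivAt ψ (levyMechanismDeriv α σ π l) l := by
  rw [show ψ = _ from funext hψ.2.2]
  refine ((((hasDerivAt_id l).const_mul α).add ((hasDerivAt_pow 2 l).const_mul (σ ^ 2 / 2))).add
    (hasDerivAt_levyIntegral hψ.2.1 hl)).congr_deriv ?_
  simp only [levyMechanismDeriv]
  ring

lemma le_levyMechanismDeriv {l : ℝ} (hl : 0 ≤ l) : α ≤ levyMechanismDeriv α σ π l := by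
  have hσ : 0 ≤ σ ^ 2 * l := by positivity
  have hint : 0 ≤ ∫ r in Ioi 0, r * (1 - Real.exp (-l * r)) ∂π :=
    setIntegral_nonneg measurableSet_Ioi fun r hr =>
      mul_one_sub_exp_neg_mul_nonneg hl (le_of_lt hr)
  simp only [levyMechanismDeriv]
  linarith

lemma tendsto_levyMechanismDeriv_nhdsGT_zero
    (hπ : Integrable (fun r => min r (r ^ 2)) (π.restrict (Ioi 0))) :
    Tendsto (levyMechanismDeriv α σ π) (𝓝[>] 0) (𝓝 α) := by
  have hlin : Tendsto (fun l : ℝ => α + σ ^ 2 * l) (𝓝[>] 0) (𝓝 α) :=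
    ((by fun_prop : Continuous fun l : ℝ => α + σ ^ 2 * l).tendsto' 0 α (by simp)).mono_left
      nhdsWithin_le_nhds
  have := hlin.add (tendsto_levyIntegralDeriv_nhdsGT_zero hπ)
  rwa [add_zero] at this

end levyMechanismDeriv

section LogBounds

variable {ψ ψ' : ℝ → ℝ} {u v : ℝ}

lemma continuousOn_log_of_hasDerivAt (hderiv : ∀ w ∈ Icc u v, HasDerivAt ψ (ψ' w) w)
    (hpos : ∀ w ∈ Icc u v, 0 < ψ w) : ContinuousOn (fun w => Real.log (ψ w)) (Icc u v) :=
  fun w hw => ((hderiv w hw).continuousAt.log (hpos w hw).ne').continuousWithinAt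

lemma integrableOn_const_mul_one_div_of_hasDerivAt (c : ℝ)
    (hderiv : ∀ w ∈ Icc u v, HasDerivAt ψ (ψ' w) w) (hpos : ∀ w ∈ Icc u v, 0 < ψ w) :
    IntegrableOn (fun w => c * (1 / ψ w)) (Icc u v) :=
  (continuousOn_const.mul (continuousOn_const.div
    (fun w hw => (hderiv w hw).continuousAt.continuousWithinAt)
    fun w hw => (hpos w hw).ne')).integrableOn_Icc

lemma mul_integral_inv_le_log_sub_log {a : ℝ} (huv : u ≤ v)
    (hderiv : ∀ w ∈ Icc u v, HasDerivAt ψ (ψ' w) w) (hpos : ∀ w ∈ Icc u v, 0 < ψ w)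
    (hle : ∀ w ∈ Ioo u v, a ≤ ψ' w) :
    a * ∫ w in u..v, 1 / ψ w ≤ Real.log (ψ v) - Real.log (ψ u) := by
  rw [← intervalIntegral.integral_const_mul]
  refine intervalIntegral.integral_le_sub_of_hasDeriv_right_of_le huv
    (continuousOn_log_of_hasDerivAt hderiv hpos)
    (fun w hw => ((hderiv w (Ioo_subset_Icc_self hw)).log
      (hpos w (Ioo_subset_Icc_self hw)).ne').hasDerivWithinAt)
    (integrableOn_const_mul_one_div_of_hasDerivAt a hderiv hpos) fun w hw => ?_
  rw [mul_one_div]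
  exact div_le_div_of_nonneg_right (hle w hw) (hpos w (Ioo_subset_Icc_self hw)).le

lemma log_sub_log_le_mul_integral_inv {b : ℝ} (huv : u ≤ v)
    (hderiv : ∀ w ∈ Icc u v, HasDerivAt ψ (ψ' w) w) (hpos : ∀ w ∈ Icc u v, 0 < ψ w)
    (hle : ∀ w ∈ Ioo u v, ψ' w ≤ b) :
    Real.log (ψ v) - Real.log (ψ u) ≤ b * ∫ w in u..v, 1 / ψ w := by
  rw [← intervalIntegral.integral_const_mul]
  refine intervalIntegral.sub_le_integral_of_hasDeriv_right_of_le huv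
    (continuousOn_log_of_hasDerivAt hderiv hpos)
    (fun w hw => ((hderiv w (Ioo_subset_Icc_self hw)).log
      (hpos w (Ioo_subset_Icc_self hw)).ne').hasDerivWithinAt)
    (integrableOn_const_mul_one_div_of_hasDerivAt b hderiv hpos) fun w hw => ?_
  rw [mul_one_div]
  exact div_le_div_of_nonneg_right (hle w hw) (hpos w (Ioo_subset_Icc_self hw)).le

end LogBounds

lemma tendsto_log_sub_log_of_integral_inv_eq {ι : Type*} {L : Filter ι} {ψ ψ' : ℝ → ℝ}
    {α c : ℝ} {u v : ι → ℝ} (hderiv : ∀ w > 0, HasDerivAt ψ (ψ' w) w)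
    (hpos : ∀ w > 0, 0 < ψ w)
    (hge : ∀ w > 0, α ≤ ψ' w) (hlim : Tendsto ψ' (𝓝[>] 0) (𝓝 α))
    (hu : Tendsto u L (𝓝[>] 0)) (hv : Tendsto v L (𝓝[>] 0)) (huv : ∀ᶠ i in L, u i ≤ v i)
    (hc : ∀ᶠ i in L, ∫ w in u i..v i, 1 / ψ w = c) :
    Tendsto (fun i => Real.log (ψ (v i)) - Real.log (ψ (u i))) L (𝓝 (α * c)) := by
  have hu0 : ∀ᶠ i in L, 0 < u i := hu self_mem_nhdsWithin
  have hIcc : ∀ᶠ i in L, ∀ w ∈ Icc (u i) (v i), 0 < w :=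
    hu0.mono fun i hi w hw => hi.trans_le hw.1
  refine tendsto_order.2 ⟨fun a ha => ?_, fun b' hb' => ?_⟩
  · filter_upwards [huv, hc, hIcc] with i hi hci hw
    refine ha.trans_le ?_
    rw [← hci]
    exact mul_integral_inv_le_log_sub_log hi (fun w h => hderiv w (hw w h))
      (fun w h => hpos w (hw w h)) fun w h => hge w (hw w (Ioo_subset_Icc_self h))
  · obtain ⟨b, hbc, hαb⟩ : ∃ b, b * c < b' ∧ α < b :=
      ((((continuous_mul_const c).tendsto α).eventually (gt_mem_nhds hb')).filter_mono
        nhdsWithin_le_nhds |>.and self_mem_nhdsWithin).exists (f := 𝓝[>] α)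
    obtain ⟨δ, hδ, hψ'δ⟩ := mem_nhdsGT_iff_exists_Ioo_subset.1 (hlim (gt_mem_nhds hαb))
    have hvδ : ∀ᶠ i in L, v i < δ := (hv.mono_right nhdsWithin_le_nhds) (gt_mem_nhds hδ)
    filter_upwards [huv, hc, hIcc, hvδ] with i hi hci hw hviδ
    refine lt_of_le_of_lt ?_ hbc
    rw [← hci]
    exact log_sub_log_le_mul_integral_inv hi (fun w h => hderiv w (hw w h))
      (fun w h => hpos w (hw w h))
      fun w h => (hψ'δ ⟨hw w (Ioo_subset_Icc_self h), h.2.trans hviδ⟩).le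

section Phi

variable {ψ φ φhat : ℝ → ℝ}

lemma phi_sub_phi_eq_integral (hint : ∀ l > (0 : ℝ), IntegrableOn (fun v => 1 / ψ v) (Ioi l))
    (hφ : ∀ l > (0 : ℝ), φ l = ∫ v in Ioi l, 1 / ψ v) {a b : ℝ} (ha : 0 < a)
    (hab : a ≤ b) :
    φ a - φ b = ∫ v in a..b, 1 / ψ v := by
  have hb : 0 < b := ha.trans_le hab
  rw [hφ a ha, hφ b hb, intervalIntegral.integral_of_le hab, ← Ioc_union_Ioi_eq_Ioi hab,
    setIntegral_union (Ioc_disjoint_Ioi le_rfl) measurableSet_Ioi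
      ((hint a ha).mono_set Ioc_subset_Ioi_self) (hint b hb)]
  ring

lemma antitoneOn_phi (hψpos : ∀ l > (0 : ℝ), 0 < ψ l)
    (hint : ∀ l > (0 : ℝ), IntegrableOn (fun v => 1 / ψ v) (Ioi l))
    (hφ : ∀ l > (0 : ℝ), φ l = ∫ v in Ioi l, 1 / ψ v) : AntitoneOn φ (Ioi 0) := by
  intro a ha b _ hab
  rw [← sub_nonneg, phi_sub_phi_eq_integral hint hφ ha hab]
  exact intervalIntegral.integral_nonneg hab fun w hw =>
    one_div_nonneg.2 (hψpos w (lt_of_lt_of_le ha hw.1)).le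

lemma antitoneOn_phiHat (hanti : AntitoneOn φ (Ioi 0))
    (hφhat : ∀ t > (0 : ℝ), 0 < φhat t ∧ φ (φhat t) = t) : AntitoneOn φhat (Ioi 0) := by
  intro t (ht : 0 < t) t' (ht' : 0 < t') htt'
  by_contra! hlt
  have hφ_le := hanti (hφhat t ht).1 (hφhat t' ht').1 hlt.le
  rw [(hφhat t ht).2, (hφhat t' ht').2] at hφ_le
  rw [le_antisymm htt' hφ_le] at hlt
  exact lt_irrefl _ hlt

lemma tendsto_phiHat_atTop (hanti : AntitoneOn φ (Ioi 0))
    (hφhat : ∀ t > (0 : ℝ), 0 < φhat t ∧ φ (φhat t) = t) :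
    Tendsto φhat atTop (𝓝[>] 0) := by
  have hpos : ∀ᶠ t in atTop, 0 < φhat t :=
    (eventually_gt_atTop 0).mono fun t ht => (hφhat t ht).1
  refine tendsto_nhdsWithin_iff.2 ⟨tendsto_order.2
    ⟨fun a ha => hpos.mono fun t ht => ha.trans ht, fun ε hε => ?_⟩, hpos⟩
  filter_upwards [eventually_gt_atTop (max (φ ε) 0)] with t ht
  by_contra! hle
  have ht0 : 0 < t := (le_max_right _ _).trans_lt ht
  have := hanti hε (hφhat t ht0).1 hle
  rw [(hφhat t ht0).2] at this
  exact (le_max_left _ _).trans_lt ht |>.not_ge this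

end Phi

theorem LevyMechanism.tendsto_div_comp_phiHat_add {α σ : ℝ} {π : Measure ℝ}
    {ψ φ φhat : ℝ → ℝ}
    (hψ : LevyMechanism α σ π ψ) (hψpos : ∀ l > (0 : ℝ), 0 < ψ l)
    (hint : ∀ l > (0 : ℝ), IntegrableOn (fun v => 1 / ψ v) (Ioi l))
    (hφ : ∀ l > (0 : ℝ), φ l = ∫ v in Ioi l, 1 / ψ v)
    (hφhat : ∀ t > (0 : ℝ), 0 < φhat t ∧ φ (φhat t) = t) {s : ℝ} (hs : s ≤ 0) :
    Tendsto (fun t => ψ (φhat (t + s)) / ψ (φhat t)) atTop (𝓝 (Real.exp (-α * s))) := by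
  have hanti := antitoneOn_phi hψpos hint hφ
  have hu := tendsto_phiHat_atTop hanti hφhat
  have hv : Tendsto (fun t => φhat (t + s)) atTop (𝓝[>] 0) :=
    hu.comp (tendsto_atTop_add_const_right _ s tendsto_id)
  have hts : ∀ᶠ t in atTop, 0 < t + s := tendsto_atTop_add_const_right _ s tendsto_id
    |>.eventually (eventually_gt_atTop 0)
  have huv : ∀ᶠ t in atTop, φhat t ≤ φhat (t + s) :=
    hts.mono fun t ht => antitoneOn_phiHat hanti hφhat ht (show 0 < t by linarith) (by linarith)
  have hc : ∀ᶠ t in atTop, ∫ w in φhat t..φhat (t + s), 1 / ψ w = -s := by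
    filter_upwards [hts, huv] with t ht htuv
    rw [← phi_sub_phi_eq_integral hint hφ (hφhat t (by linarith)).1 htuv,
      (hφhat t (by linarith)).2, (hφhat (t + s) ht).2]
    ring
  have hlog := tendsto_log_sub_log_of_integral_inv_eq (fun w hw => hψ.hasDerivAt hw) hψpos
    (fun w hw => le_levyMechanismDeriv hw.le) (tendsto_levyMechanismDeriv_nhdsGT_zero hψ.2.1)
    hu hv huv hc
  have hexp_log : ∀ᶠ t in atTop,
      Real.exp (Real.log (ψ (φhat (t + s))) - Real.log (ψ (φhat t)))
        = ψ (φhat (t + s)) / ψ (φhat t) := by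
    filter_upwards [hts, eventually_gt_atTop 0] with t ht ht0
    rw [Real.exp_sub, Real.exp_log (hψpos _ (hφhat _ ht).1),
      Real.exp_log (hψpos _ (hφhat _ ht0).1)]
  rw [neg_mul, ← mul_neg]
  exact hlog.rexp.congr' hexp_log

theorem stmt15_general (α σ : ℝ) (π : Measure ℝ) (ψ φ φhat : ℝ → ℝ)
    (hψ : LevyMechanism α σ π ψ)
    (hψpos : ∀ l > (0 : ℝ), 0 < ψ l)
    (hint : ∀ l > (0 : ℝ), IntegrableOn (fun v => 1 / ψ v) (Set.Ioi l))
    (hφ : ∀ l > (0 : ℝ), φ l = ∫ v in Set.Ioi l, 1 / ψ v)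
    (hφhat : ∀ t > (0 : ℝ), 0 < φhat t ∧ φ (φhat t) = t) :
    ∀ x > (0 : ℝ), ∀ q > (0 : ℝ), ∀ l > (0 : ℝ),
      Tendsto (fun t =>
          Real.exp (-x * (φhat (t - q + φ (l + φhat q)) - φhat t)) *
            (ψ (φhat (t - q + φ (l + φhat q))) / ψ (φhat t)) *
            (ψ (φhat q) / ψ (l + φhat q)))
        atTop
        (nhds (Real.exp (-α * (φ (l + φhat q) - q)) * (ψ (φhat q) / ψ (l + φhat q)))) := by
  intro x _ q hq l hl
  have hanti := antitoneOn_phi hψpos hint hφ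
  obtain ⟨hq0, hqφ⟩ := hφhat q hq
  set s := φ (l + φhat q) - q
  have hs : s ≤ 0 := by
    have := hanti hq0 (show 0 < l + φhat q by linarith) (by linarith)
    linarith
  have harg : ∀ t, t - q + φ (l + φhat q) = t + s := fun t => by ring
  simp only [harg]
  have hu := (tendsto_phiHat_atTop hanti hφhat).mono_right nhdsWithin_le_nhds
  have hv : Tendsto (fun t => φhat (t + s)) atTop (𝓝 0) :=
    hu.comp (tendsto_atTop_add_const_right _ s tendsto_id)
  have hexp : Tendsto (fun t => Real.exp (-x * (φhat (t + s) - φhat t))) atTop (𝓝 1) := by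
    simpa using ((hv.sub hu).const_mul (-x)).rexp
  simpa using (hexp.mul (hψ.tendsto_div_comp_phiHat_add hψpos hint hφ hφhat hs)).mul_const
    (ψ (φhat q) / ψ (l + φhat q))

/-- (Sub)critical case: the Laplace functional of `Z_{t−q}` conditioned on
`{ζ = t}` converges as `t → ∞` to
`e^{−α(φ(λ+φ̂(q))−q)} ψ(φ̂(q))/ψ(λ+φ̂(q))`. -/
theorem stmt15 (α σ : ℝ) (π : Measure ℝ) (ψ φ φhat : ℝ → ℝ)
    (hα : 0 ≤ α)
    (hψ : LevyMechanism α σ π ψ)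
    (hψpos : ∀ l > (0 : ℝ), 0 < ψ l)
    (hint : ∀ l > (0 : ℝ), IntegrableOn (fun v => 1 / ψ v) (Set.Ioi l))
    (hφ : ∀ l > (0 : ℝ), φ l = ∫ v in Set.Ioi l, 1 / ψ v)
    (hφhat : ∀ t > (0 : ℝ), 0 < φhat t ∧ φ (φhat t) = t) :
    ∀ x > (0 : ℝ), ∀ q > (0 : ℝ), ∀ l > (0 : ℝ),
      Tendsto (fun t =>
          Real.exp (-x * (φhat (t - q + φ (l + φhat q)) - φhat t)) *
            (ψ (φhat (t - q + φ (l + φhat q))) / ψ (φhat t)) *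
            (ψ (φhat q) / ψ (l + φhat q)))
        atTop
        (nhds (Real.exp (-α * (φ (l + φhat q) - q)) * (ψ (φhat q) / ψ (l + φhat q)))) :=
  stmt15_general α σ π ψ φ φhat hψ hψpos hint hφ hφhat
end
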